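/- Let R be a principal ideal domain and let C be a projective chain complex over RΓ. Then for every G-map f : G/H → G/K (with H, K ∈ F), the induced chain map C(f) : C(K) → C(H) is injective in every degree and each cokernel C_i(H)/im(C_i(f)) is a torsion-free R-module. -/

import Mathlib

/-!
On a free module `M = ⨁ᵢ R[(G/Lᵢ)^?]` the map `M(f)` induced by `f : G/H → G/K` is the map of
free `R`-modules given on the bases `⨿ᵢ Hom(G/K, G/Lᵢ) → ⨿ᵢ Hom(G/H, G/Lᵢ)` by `g ↦ g ∘ f`.
A `G`-map between orbits is surjective, so this map of bases is injective: `M(f)` is injective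
and its image is spanned by part of a basis, so its cokernel is free, in particular torsion
free. Both properties are stable under retracts of arrows, so they pass to projective modules.
-/

open CategoryTheory CategoryTheory.Limits Opposite

noncomputable section

namespace OrbitPaper

variable (G : Type) [Group G] (F : Set (Subgroup G)) (R : Type) [CommRing R]

/-- The conjugate subgroup `gHg⁻¹` of `H`. -/
def conjSub (g : G) (H : Subgroup G) : Subgroup G := H.map (MulAut.conj g).toMonoidHom

/-- `(H) ≤ (K)` : some conjugate of `H` is contained in `K`. -/
def Subconj (H K : Subgroup G) : Prop := ∃ g : G, conjSub G g H ≤ K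

/-- `(H) < (K)` : `(H) ≤ (K)` but not `(K) ≤ (H)`. -/
def SubconjLT (H K : Subgroup G) : Prop := Subconj G H K ∧ ¬ Subconj G K H

/-- `F` is a family of subgroups closed under conjugation and under taking subgroups. -/
def IsClosedFamily : Prop :=
  (∀ (g : G) (H : Subgroup G), H ∈ F → conjSub G g H ∈ F) ∧
    (∀ H K : Subgroup G, H ≤ K → K ∈ F → H ∈ F)

/-- A super class function defined on `F`: it is constant on conjugacy classes and
takes the value `-1` outside of `F`. -/
def IsSuperClass (n : Subgroup G → ℤ) : Prop :=
  (∀ (g : G) (H : Subgroup G), n (conjSub G g H) = n H) ∧ (∀ H : Subgroup G, H ∉ F → n H = -1)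

/-- Objects of the orbit category `Or_F G` : orbits `G/K` with `K ∈ F`. -/
structure OrbitObj : Type where
  grp : Subgroup G
  mem : grp ∈ F

variable {G F}

/-- The orbit category: morphisms `G/K → G/L` are the `G`-equivariant maps. -/
instance : Category (OrbitObj G F) where
  Hom A B := { f : G ⧸ A.grp → G ⧸ B.grp // ∀ (g : G) (x : G ⧸ A.grp), f (g • x) = g • f x }
  id A := ⟨fun x => x, fun _ _ => rfl⟩
  comp f g := ⟨fun x => g.1 (f.1 x), fun a x => by
    show g.1 (f.1 (a • x)) = a • g.1 (f.1 x)
    rw [f.2, g.2]⟩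

/-- The canonical projection `G/H → G/K` for `H ≤ K`, as a morphism of the orbit category. -/
def projMor (A B : OrbitObj G F) (h : A.grp ≤ B.grp) : A ⟶ B :=
  ⟨Quotient.map' id (fun a b hab => by
      rw [QuotientGroup.leftRel_apply] at hab ⊢
      exact h hab),
   fun g x => by
      induction x using Quotient.inductionOn' with
      | h a => rfl⟩

lemma projMor_comp (A B C' : OrbitObj G F) (h1 : A.grp ≤ B.grp) (h2 : B.grp ≤ C'.grp) :
    projMor A C' (h1.trans h2) = projMor A B h1 ≫ projMor B C' h2 := by
  apply Subtype.ext
  funext x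
  induction x using Quotient.inductionOn' with
  | h a => rfl

variable (G F) in
/-- The category of `RΓ`-modules: contravariant functors from the orbit category to `R`-modules. -/
abbrev OrbMod := (OrbitObj G F)ᵒᵖ ⥤ ModuleCat.{0} R

variable {R}

/-- The free `RΓ`-module on the family of orbits `G/b i`; evaluated at `G/A` it is the free
`R`-module on `⨿ᵢ (G/b i)^A = ⨿ᵢ Hom(G/A, G/b i)`. -/
def freeOn {ι : Type} (b : ι → OrbitObj G F) : OrbMod G F R where
  obj A := ModuleCat.of R ((Σ i : ι, (A.unop ⟶ b i)) →₀ R)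
  map {A B} f := ModuleCat.ofHom (Finsupp.lmapDomain R R (fun x => ⟨x.1, f.unop ≫ x.2⟩))
  map_id A := by
    have h : (fun x : (Σ i : ι, (A.unop ⟶ b i)) =>
        ((⟨x.1, (𝟙 A : A ⟶ A).unop ≫ x.2⟩ : Σ i : ι, (A.unop ⟶ b i)))) = _root_.id := by
      funext x
      cases x with
      | mk i g => simp
    show ModuleCat.ofHom (Finsupp.lmapDomain R R _) = _
    rw [h, Finsupp.lmapDomain_id]
    rfl
  map_comp {A B C} f g := by
    have h : (fun x : (Σ i : ι, (A.unop ⟶ b i)) =>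
          ((⟨x.1, (f ≫ g).unop ≫ x.2⟩ : Σ i : ι, (C.unop ⟶ b i)))) =
        (fun x : (Σ i : ι, (B.unop ⟶ b i)) =>
          ((⟨x.1, g.unop ≫ x.2⟩ : Σ i : ι, (C.unop ⟶ b i)))) ∘
        (fun x : (Σ i : ι, (A.unop ⟶ b i)) =>
          ((⟨x.1, f.unop ≫ x.2⟩ : Σ i : ι, (B.unop ⟶ b i)))) := by
      funext x
      cases x with
      | mk i h => simp
    show ModuleCat.ofHom (Finsupp.lmapDomain R R _) = _
    rw [h, Finsupp.lmapDomain_comp]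
    rfl

/-- The morphism of free modules induced by a reindexing map `u : ι' → ι`. -/
def freeOnMap {ι' ι : Type} (u : ι' → ι) (b : ι → OrbitObj G F) :
    (freeOn (R := R) (fun j => b (u j))) ⟶ freeOn (R := R) b where
  app A := ModuleCat.ofHom (Finsupp.lmapDomain R R (fun x => ⟨u x.1, x.2⟩))
  naturality {A B} f := by
    apply ModuleCat.hom_ext
    show (Finsupp.lmapDomain R R _).comp (Finsupp.lmapDomain R R _) =
      (Finsupp.lmapDomain R R _).comp (Finsupp.lmapDomain R R _)
    rw [← Finsupp.lmapDomain_comp, ← Finsupp.lmapDomain_comp]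
    rfl

variable (R) in
/-- An `RΓ`-module is free if it is isomorphic to a direct sum of modules `R[(G/K)^?]`. -/
def IsFreeMod (M : OrbMod G F R) : Prop :=
  ∃ (ι : Type) (b : ι → OrbitObj G F), Nonempty (M ≅ freeOn b)

variable (R) in
/-- A finitely generated free `RΓ`-module. -/
def IsFinFreeMod (M : OrbMod G F R) : Prop :=
  ∃ (k : ℕ) (b : Fin k → OrbitObj G F), Nonempty (M ≅ freeOn b)

variable (R) in
/-- An `RΓ`-module is projective if it is a direct summand of a free module. -/
def IsProjMod (M : OrbMod G F R) : Prop :=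
  ∃ (P : OrbMod G F R) (i : M ⟶ P) (r : P ⟶ M), IsFreeMod R P ∧ i ≫ r = 𝟙 M

variable (R) in
/-- A finitely generated projective `RΓ`-module: a direct summand of a f.g. free module. -/
def IsFinProjMod (M : OrbMod G F R) : Prop :=
  ∃ (P : OrbMod G F R) (i : M ⟶ P) (r : P ⟶ M), IsFinFreeMod R P ∧ i ≫ r = 𝟙 M

variable (R) in
/-- A finitely generated `RΓ`-module: a quotient of a f.g. free module. -/
def IsFGMod (M : OrbMod G F R) : Prop :=
  ∃ (k : ℕ) (b : Fin k → OrbitObj G F) (π : freeOn b ⟶ M),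
    ∀ A : (OrbitObj G F)ᵒᵖ, Function.Surjective (π.app A)

variable (G F R) in
/-- (Nonnegatively graded) chain complexes of `RΓ`-modules. -/
abbrev OrbCx := ChainComplex (OrbMod G F R) ℕ

variable (R) in
/-- The complex is zero above some dimension. -/
def IsBoundedCx (C : OrbCx G F R) : Prop := ∃ n : ℕ, ∀ i : ℕ, n < i → IsZero (C.X i)

variable (R) in
/-- A finite free chain complex of `RΓ`-modules. -/
def IsFiniteFreeCx (C : OrbCx G F R) : Prop := IsBoundedCx R C ∧ ∀ i, IsFinFreeMod R (C.X i)

variable (R) in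
/-- A finite projective chain complex of `RΓ`-modules. -/
def IsFiniteProjCx (C : OrbCx G F R) : Prop := IsBoundedCx R C ∧ ∀ i, IsFinProjMod R (C.X i)

/-- Evaluation of a chain complex of `RΓ`-modules at an orbit `G/A`; this is the complex
`C(A)` of `R`-modules. -/
def evalCx (C : OrbCx G F R) (A : OrbitObj G F) : ChainComplex (ModuleCat.{0} R) ℕ where
  X i := (C.X i).obj (op A)
  d i j := (C.d i j).app (op A)
  shape i j h := by
    show (C.d i j).app (op A) = 0
    rw [C.shape i j h]; simp
  d_comp_d' i j k _ _ := by
    show (C.d i j).app (op A) ≫ (C.d j k).app (op A) = 0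
    rw [← NatTrans.comp_app, C.d_comp_d]; simp

/-- The chain map `C(f) : C(K) → C(H)` induced by a `G`-map `f : G/H → G/K`. -/
def evalMap (C : OrbCx G F R) {A B : OrbitObj G F} (f : A ⟶ B) :
    evalCx C B ⟶ evalCx C A where
  f i := (C.X i).map f.op
  comm' i j _ := (C.d i j).naturality f.op

/-- `Dim C` at an object of the orbit category: the largest `d` with `C_d(A) ≠ 0`
(and `-1` if `C(A) = 0`). -/
def dimObj (C : OrbCx G F R) (A : OrbitObj G F) : ℤ :=
  sSup (insert (-1) {d : ℤ | ∃ i : ℕ, (i : ℤ) = d ∧ ¬ IsZero ((C.X i).obj (op A))})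

open Classical in
/-- The dimension function `Dim C` as a super class function on all subgroups of `G`. -/
def dimFun (C : OrbCx G F R) (H : Subgroup G) : ℤ :=
  if h : H ∈ F then dimObj C ⟨H, h⟩ else -1

/-- The homological dimension of `C(A)` : the largest `d` with `H_d(C(A)) ≠ 0`. -/
def hdimObj (C : OrbCx G F R) (A : OrbitObj G F) : ℤ :=
  sSup (insert (-1) {d : ℤ | ∃ i : ℕ, (i : ℤ) = d ∧ ¬ IsZero ((evalCx C A).homology i)})

/-- `C` is tight at `A` if `Dim C(A) = hdim C(A)`. -/
def TightAt (C : OrbCx G F R) (A : OrbitObj G F) : Prop := dimObj C A = hdimObj C A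

variable (G F R) in
/-- The constant functor `R̲`. -/
def constR : OrbMod G F R := (Functor.const (OrbitObj G F)ᵒᵖ).obj (ModuleCat.of R R)

variable (R) in
/-- The augmented complex `⋯ → D_1 → D_0 → R → 0` of a complex of `R`-modules equipped
with an augmentation `e`, with `R` placed in degree `0` (so degree `i+1` is old degree `i`). -/
def augmentR (D : ChainComplex (ModuleCat.{0} R) ℕ) (e : D.X 0 ⟶ ModuleCat.of R R)
    (he : D.d 1 0 ≫ e = 0) : ChainComplex (ModuleCat.{0} R) ℕ :=
  ChainComplex.of (fun n => match n with | 0 => ModuleCat.of R R | (k+1) => D.X k)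
    (fun n => match n with | 0 => e | (k+1) => D.d (k+1) k)
    (fun n => match n with | 0 => he | (k+1) => D.d_comp_d _ _ _)

variable (R) in
/-- A complex of `R`-modules (already augmented) has the homology of an `nv`-sphere:
homology `R` in degree `nv + 1` and zero elsewhere.  (Degree `d` of reduced homology
corresponds to degree `d+1` of the augmented complex.) -/
def SphereLike (D : ChainComplex (ModuleCat.{0} R) ℕ) (nv : ℤ) : Prop :=
  ∃ m : ℕ, (m : ℤ) = nv + 1 ∧ (∀ i : ℕ, i ≠ m → IsZero (D.homology i)) ∧
    Nonempty (D.homology m ≅ ModuleCat.of R R)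

lemma eval_d_aug (C : OrbCx G F R) (ε : C.X 0 ⟶ constR G F R) (hε : C.d 1 0 ≫ ε = 0)
    (A : OrbitObj G F) :
    (evalCx C A).d 1 0 ≫ (ε.app (op A) : (C.X 0).obj (op A) ⟶ ModuleCat.of R R) = 0 := by
  show (C.d 1 0).app (op A) ≫ ε.app (op A) = 0
  rw [← NatTrans.comp_app, hε]
  simp

/-- `C` is an (augmented) `R`-homology `n`-sphere: for every `K ∈ F` the reduced homology of
`C(K)` is that of an `n(K)`-sphere. -/
def IsHomologySphere (C : OrbCx G F R) (ε : C.X 0 ⟶ constR G F R) (hε : C.d 1 0 ≫ ε = 0)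
    (n : Subgroup G → ℤ) : Prop :=
  ∀ A : OrbitObj G F,
    SphereLike R (augmentR R (evalCx C A) (ε.app (op A)) (eval_d_aug C ε hε A)) (n A.grp)

variable (G) in
/-- Condition (i): the dimension function is monotone. -/
def CondI (n : Subgroup G → ℤ) : Prop :=
  ∀ H K : Subgroup G, Subconj G H K → n K ≤ n H

/-- Condition (ii): if `n(H) = n(K)` then every `G`-map `f : G/H → G/K` induces an
`R`-homology isomorphism `C(K) → C(H)`. -/
def CondII (C : OrbCx G F R) (n : Subgroup G → ℤ) : Prop :=
  ∀ (A B : OrbitObj G F) (f : A ⟶ B), n A.grp = n B.grp →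
    ∀ i : ℕ, IsIso (HomologicalComplex.homologyMap (evalMap C f) i)

variable (G F) in
/-- Condition (iii): joins of subgroups realizing the same dimension stay in the
family with the same dimension. -/
def CondIII (n : Subgroup G → ℤ) : Prop :=
  ∀ H K L : Subgroup G, H ∈ F → K ∈ F → L ∈ F → H ≤ K → H ≤ L →
    n H = n K → n H = n L → -1 < n H → (K ⊔ L ∈ F ∧ n (K ⊔ L) = n H)



/-- The subcomplex of a complex of `R`-modules determined by a compatible family of
submodules. -/
def subCx (D : ChainComplex (ModuleCat.{0} R) ℕ) (N : ∀ i, Submodule R (D.X i))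
    (hN : ∀ i j, ∀ x ∈ N i, D.d i j x ∈ N j) : ChainComplex (ModuleCat.{0} R) ℕ where
  X i := ModuleCat.of R (N i)
  d i j := ModuleCat.ofHom ((D.d i j).hom.restrict (hN i j))
  shape i j h := by
    ext x
    show D.d i j x.1 = 0
    rw [D.shape i j h]
    rfl
  d_comp_d' i j k _ _ := by
    ext x
    show D.d j k (D.d i j x.1) = 0
    rw [← ConcreteCategory.comp_apply, D.d_comp_d i j k]
    rfl

/-- The inclusion of subcomplexes induced by inclusions of submodules. -/
def subCxIncl (D : ChainComplex (ModuleCat.{0} R) ℕ) (N N' : ∀ i, Submodule R (D.X i))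
    (hN : ∀ i j, ∀ x ∈ N i, D.d i j x ∈ N j) (hN' : ∀ i j, ∀ x ∈ N' i, D.d i j x ∈ N' j)
    (h : ∀ i, N' i ≤ N i) : subCx D N' hN' ⟶ subCx D N hN where
  f i := ModuleCat.ofHom (Submodule.inclusion (h i))
  comm' i j _ := by
    ext x
    rfl

/-- The quotient complex of a complex of `R`-modules by a compatible family of submodules. -/
def subQuotCx (D : ChainComplex (ModuleCat.{0} R) ℕ) (N : ∀ i, Submodule R (D.X i))
    (hN : ∀ i j, ∀ x ∈ N i, D.d i j x ∈ N j) : ChainComplex (ModuleCat.{0} R) ℕ where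
  X i := ModuleCat.of R ((D.X i) ⧸ N i)
  d i j := ModuleCat.ofHom (Submodule.mapQ (N i) (N j) (D.d i j).hom (fun x hx => hN i j x hx))
  shape i j h := by
    apply ModuleCat.hom_ext
    refine Submodule.linearMap_qext _ ?_
    ext x
    simp only [LinearMap.comp_apply, Submodule.mkQ_apply, Submodule.mapQ_apply,
      D.shape i j h]
    rfl
  d_comp_d' i j k _ _ := by
    apply ModuleCat.hom_ext
    refine Submodule.linearMap_qext _ ?_
    ext x
    have hx : D.d j k (D.d i j x) = 0 := by
      rw [← ConcreteCategory.comp_apply, D.d_comp_d i j k]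
      rfl
    show (Submodule.mapQ (N j) (N k) (D.d j k).hom (fun y hy => hN j k y hy))
        ((Submodule.mapQ (N i) (N j) (D.d i j).hom (fun y hy => hN i j y hy))
          (Submodule.Quotient.mk x)) = 0
    rw [Submodule.mapQ_apply, Submodule.mapQ_apply, hx]
    rfl

/-- The restriction of an augmentation to a subcomplex. -/
def subAug (D : ChainComplex (ModuleCat.{0} R) ℕ) (N : ∀ i, Submodule R (D.X i))
    (hN : ∀ i j, ∀ x ∈ N i, D.d i j x ∈ N j) (e : D.X 0 ⟶ ModuleCat.of R R) :
    (subCx D N hN).X 0 ⟶ ModuleCat.of R R :=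
  ModuleCat.ofHom ((e.hom : D.X 0 →ₗ[R] (ModuleCat.of R R)).comp (N 0).subtype)

lemma subAug_d (D : ChainComplex (ModuleCat.{0} R) ℕ) (N : ∀ i, Submodule R (D.X i))
    (hN : ∀ i j, ∀ x ∈ N i, D.d i j x ∈ N j) (e : D.X 0 ⟶ ModuleCat.of R R)
    (he : D.d 1 0 ≫ e = 0) :
    (subCx D N hN).d 1 0 ≫ subAug D N hN e = 0 := by
  ext x
  show e (D.d 1 0 x.1) = 0
  rw [← ConcreteCategory.comp_apply, he]
  rfl

lemma mapRange_le (C : OrbCx G F R) {A B : OrbitObj G F} (f : A ⟶ B) (i j : ℕ) :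
    Submodule.map ((evalCx C A).d i j).hom (LinearMap.range ((C.X i).map f.op).hom) ≤
      LinearMap.range ((C.X j).map f.op).hom := by
  rintro x ⟨y, ⟨z, rfl⟩, rfl⟩
  refine ⟨(C.d i j).app (op B) z, ?_⟩
  show ((C.d i j).app (op B) ≫ (C.X j).map f.op) z = ((C.X i).map f.op ≫ (C.d i j).app (op A)) z
  rw [(C.d i j).naturality f.op]

/-- The sum of the images of the maps `C(f_k) : C(B_k) → C(A)` in degree `i`. -/
def rangeN (C : OrbCx G F R) (A : OrbitObj G F) {κ : Type} (Bs : κ → OrbitObj G F)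
    (fs : ∀ k, A ⟶ Bs k) (i : ℕ) : Submodule R ((evalCx C A).X i) :=
  ⨆ k, LinearMap.range ((C.X i).map (fs k).op).hom

lemma rangeN_compat (C : OrbCx G F R) (A : OrbitObj G F) {κ : Type} (Bs : κ → OrbitObj G F)
    (fs : ∀ k, A ⟶ Bs k) :
    ∀ i j, ∀ x ∈ rangeN C A Bs fs i, (evalCx C A).d i j x ∈ rangeN C A Bs fs j := by
  intro i j x hx
  have hmap : Submodule.map ((evalCx C A).d i j).hom (rangeN C A Bs fs i) ≤ rangeN C A Bs fs j := by
    rw [rangeN, Submodule.map_iSup]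
    exact iSup_le fun k => (mapRange_le C (fs k) i j).trans
      (le_iSup (fun k' => LinearMap.range ((C.X j).map (fs k').op).hom) k)
  exact hmap ⟨x, hx, rfl⟩

lemma range_le_of_factor (C : OrbCx G F R) {A B B' : OrbitObj G F} (f : A ⟶ B) (g : B ⟶ B')
    (i : ℕ) :
    LinearMap.range ((C.X i).map (f ≫ g).op).hom ≤ LinearMap.range ((C.X i).map f.op).hom := by
  rintro x ⟨z, rfl⟩
  refine ⟨(C.X i).map g.op z, ?_⟩
  have h : (C.X i).map (f ≫ g).op = (C.X i).map g.op ≫ (C.X i).map f.op := by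
    rw [op_comp, Functor.map_comp]
  rw [h]
  simp

/-- The product of two `RΓ`-modules. -/
def prodF (M N : OrbMod G F R) : OrbMod G F R where
  obj A := ModuleCat.of R (M.obj A × N.obj A)
  map {A B} f := ModuleCat.ofHom (LinearMap.prodMap (M.map f).hom (N.map f).hom)
  map_id A := by
    show ModuleCat.ofHom (LinearMap.prodMap (M.map (𝟙 A)).hom (N.map (𝟙 A)).hom) = _
    rw [M.map_id, N.map_id]
    exact congrArg ModuleCat.ofHom (LinearMap.prodMap_id ..)
  map_comp {A B C} f g := by
    show ModuleCat.ofHom (LinearMap.prodMap (M.map (f ≫ g)).hom (N.map (f ≫ g)).hom) = _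
    rw [M.map_comp, N.map_comp]
    exact congrArg ModuleCat.ofHom (LinearMap.prodMap_comp ..).symm



/-- Evaluation of a chain map of complexes of `RΓ`-modules at an orbit. -/
def evalCxMap {C D : OrbCx G F R} (phi : C ⟶ D) (A : OrbitObj G F) :
    evalCx C A ⟶ evalCx D A where
  f i := (phi.f i).app (op A)
  comm' i j _ := by
    show (phi.f i).app (op A) ≫ (D.d i j).app (op A) =
      (C.d i j).app (op A) ≫ (phi.f j).app (op A)
    rw [← NatTrans.comp_app, ← NatTrans.comp_app, phi.comm i j]

/-- The cokernel complex of a chain map of complexes of `R`-modules. -/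
def cokerCx {D E : ChainComplex (ModuleCat.{0} R) ℕ} (phi : E ⟶ D) :
    ChainComplex (ModuleCat.{0} R) ℕ :=
  subQuotCx D (fun i => LinearMap.range (phi.f i).hom) (fun i j x hx => by
    obtain ⟨y, rfl⟩ := hx
    refine ⟨E.d i j y, ?_⟩
    show (E.d i j ≫ phi.f j) y = (phi.f i ≫ D.d i j) y
    rw [phi.comm i j])

variable (G) in
/-- Indices of summands of type `(K)` with `(H) ≤ (K)`, for `H = A₀.grp`. -/
abbrev SubIdx (A₀ : OrbitObj G F) {κ : Type} (bb : κ → OrbitObj G F) : Type :=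
  {j : κ // Subconj G A₀.grp (bb j).grp}

variable (G) in
/-- Indices of summands of type `(K)` with `(H) < (K)`, for `H = A₀.grp`. -/
abbrev SubIdxLT (A₀ : OrbitObj G F) {κ : Type} (bb : κ → OrbitObj G F) : Type :=
  {j : κ // SubconjLT G A₀.grp (bb j).grp}



end OrbitPaper

theorem Submodule.noZeroSMulDivisors_quotient_iff {R M : Type*} [Ring R] [AddCommGroup M]
    [Module R M] (N : Submodule R M) :
    NoZeroSMulDivisors R (M ⧸ N) ↔ ∀ r : R, r ≠ 0 → ∀ x : M, r • x ∈ N → x ∈ N := by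
  rw [noZeroSMulDivisors_iff_right_eq_zero_of_smul]
  refine forall₂_congr fun r _ => ?_
  simp only [(Submodule.Quotient.mk_surjective N).forall, ← Submodule.Quotient.mk_smul,
    Submodule.Quotient.mk_eq_zero]

namespace Finsupp

variable {α β R M : Type*}

theorem range_lmapDomain_eq_supported [Semiring R] [AddCommMonoid M] [Module R M] (u : α → β) :
    LinearMap.range (lmapDomain M R u) = supported M R (Set.range u) := by
  rw [LinearMap.range_eq_map, ← supported_univ, lmapDomain_supported, Set.image_univ]

theorem noZeroSMulDivisors_quotient_range_lmapDomain [Ring R] [IsDomain R] [AddCommGroup M]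
    [Module R M] [Module.IsTorsionFree R M] (u : α → β) :
    NoZeroSMulDivisors R ((β →₀ M) ⧸ LinearMap.range (lmapDomain M R u)) := by
  refine (Submodule.noZeroSMulDivisors_quotient_iff _).2 fun r hr x hx => ?_
  rw [range_lmapDomain_eq_supported] at hx ⊢
  rwa [mem_supported R, support_smul_eq hr, ← mem_supported R] at hx

end Finsupp

namespace ModuleCat

variable (R : Type*) [Ring R]

def torsionFreeCokernels : MorphismProperty (ModuleCat R) :=
  fun _ Y φ => NoZeroSMulDivisors R (Y ⧸ LinearMap.range φ.hom)

instance : (torsionFreeCokernels R).IsStableUnderRetracts where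
  of_retract {_ _ _ _} {φ ψ} h hψ := by
    refine (Submodule.noZeroSMulDivisors_quotient_iff _).2 fun r hr y ⟨x, hx⟩ => ?_
    have hy : r • h.i.right y ∈ LinearMap.range ψ.hom := by
      refine ⟨h.i.left x, ?_⟩
      calc ψ (h.i.left x) = h.i.right (φ x) := ConcreteCategory.congr_hom h.i_w x
        _ = r • h.i.right y := by rw [hx, map_smul]
    obtain ⟨z, hz⟩ := (Submodule.noZeroSMulDivisors_quotient_iff _).1 hψ r hr _ hy
    refine ⟨h.r.left z, ?_⟩
    calc φ (h.r.left z) = h.r.right (ψ z) := ConcreteCategory.congr_hom h.r_w z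
      _ = y := by rw [hz]; exact ConcreteCategory.congr_hom h.retract_right y

end ModuleCat

namespace OrbitPaper

variable {G : Type} [Group G] {F : Set (Subgroup G)} {R : Type} [CommRing R]

theorem OrbitObj.hom_surjective {A B : OrbitObj G F} (f : A ⟶ B) : Function.Surjective f.1 := by
  intro y
  obtain ⟨g, hg⟩ := MulAction.exists_smul_eq G (f.1 (QuotientGroup.mk 1)) y
  exact ⟨g • QuotientGroup.mk 1, by rw [f.2, hg]⟩

instance {A B : OrbitObj G F} (f : A ⟶ B) : Epi f where
  left_cancellation g h hgh := Subtype.ext <| funext fun y => by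
    obtain ⟨x, rfl⟩ := OrbitObj.hom_surjective f y
    exact congrFun (congrArg Subtype.val hgh) x

theorem freeOn_map_hom {ι : Type} (b : ι → OrbitObj G F) {A B : OrbitObj G F} (f : A ⟶ B) :
    ((freeOn (R := R) b).map f.op).hom =
      Finsupp.lmapDomain R R
        (Sigma.map (β₁ := fun i => B ⟶ b i) (β₂ := fun i => A ⟶ b i) id fun _ g => f ≫ g) :=
  rfl

theorem mono_freeOn_map {ι : Type} (b : ι → OrbitObj G F) {A B : OrbitObj G F} (f : A ⟶ B) :
    Mono ((freeOn (R := R) b).map f.op) := by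
  rw [ModuleCat.mono_iff_injective]
  show Function.Injective ((freeOn b).map f.op).hom
  rw [freeOn_map_hom]
  exact Finsupp.mapDomain_injective (Function.injective_id.sigma_map fun _ _ _ => (cancel_epi f).1)

theorem torsionFreeCokernels_freeOn_map [IsDomain R] {ι : Type} (b : ι → OrbitObj G F)
    {A B : OrbitObj G F} (f : A ⟶ B) :
    ModuleCat.torsionFreeCokernels R ((freeOn (R := R) b).map f.op) := by
  rw [ModuleCat.torsionFreeCokernels, freeOn_map_hom]
  exact Finsupp.noZeroSMulDivisors_quotient_range_lmapDomain _

theorem IsProjMod.exists_retract_freeOn {M : OrbMod G F R} (hM : IsProjMod R M) :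
    ∃ (ι : Type) (b : ι → OrbitObj G F), Nonempty (Retract M (freeOn b)) := by
  obtain ⟨P, i, r, ⟨ι, b, ⟨e⟩⟩, hir⟩ := hM
  exact ⟨ι, b, ⟨(Retract.mk i r hir).trans (Retract.ofIso e)⟩⟩

theorem IsProjMod.map_mem (W : MorphismProperty (ModuleCat R)) [W.IsStableUnderRetracts]
    {M : OrbMod G F R} (hM : IsProjMod R M) {A B : OrbitObj G F} (f : A ⟶ B)
    (hfree : ∀ (ι : Type) (b : ι → OrbitObj G F), W ((freeOn b).map f.op)) :
    W (M.map f.op) := by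
  obtain ⟨ι, b, ⟨h⟩⟩ := hM.exists_retract_freeOn
  exact W.of_retract (NatTrans.retractArrowApp ((evaluation _ _).map f.op) h) (hfree ι b)

theorem stmt1_general [IsDomain R]
    (C : OrbCx G F R) (hproj : ∀ i, IsProjMod R (C.X i))
    {A B : OrbitObj G F} (f : A ⟶ B) (i : ℕ) :
    Function.Injective ⇑((C.X i).map f.op) ∧
    NoZeroSMulDivisors R
      (↥((C.X i).obj (op A)) ⧸ LinearMap.range ((C.X i).map f.op).hom) := by
  have h := (hproj i).map_mem (.monomorphisms _ ⊓ ModuleCat.torsionFreeCokernels R) f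
    fun _ b => ⟨mono_freeOn_map b f, torsionFreeCokernels_freeOn_map b f⟩
  exact ⟨(ModuleCat.mono_iff_injective _).1 h.1, h.2⟩

/-- over a PID, for a projective chain complex over `RΓ` every induced map
`C(f) : C(K) → C(H)` is degreewise injective with torsion-free cokernel. -/
theorem stmt1 [IsDomain R] [IsPrincipalIdealRing R]
    (hF : IsClosedFamily G F) (C : OrbCx G F R) (hproj : ∀ i, IsProjMod R (C.X i))
    {A B : OrbitObj G F} (f : A ⟶ B) (i : ℕ) :
    Function.Injective ⇑((C.X i).map f.op) ∧
    NoZeroSMulDivisors R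
      (↥((C.X i).obj (op A)) ⧸ LinearMap.range ((C.X i).map f.op).hom) :=
  stmt1_general C hproj f i

end OrbitPaper
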